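/- arXiv:0908.3596 — 3 statements merged into one kernel-verified Lean document; each statement's English description precedes it below -/
import Mathlib

section
/- Let ξ be standard normal and r ≥ 0. There exist constants 0 < c'_2(r) < c_2(r) such that for all z ≥ 1: c'_2(r) z^{r-1/2} e^{-z} ≤ E[|ξ|^{2r} 1(ξ² > 2z)] ≤ c_2(r) z^{r-1/2} e^{-z}. -/
open MeasureTheory ProbabilityTheory
open scoped NNReal

/-!
Writing the Gaussian density as `(2π)^{-1/2} e^{-x²/2}` and using the symmetry `x ↦ -x`, the
truncated moment is `2 (2π)^{-1/2} ∫_a^∞ x^{2r} e^{-x²/2} dx` with `a = √(2z) ≥ 1`, so it suffices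
to show that this tail integral is comparable to `a^{2r-1} e^{-a²/2} = 2^{r-1/2} z^{r-1/2} e^{-z}`.
The lower bound comes from the interval `(a, a + 1/a]`, on which the integrand is at least
`e^{-3/2} a^{2r} e^{-a²/2}`. For the upper bound, the substitution `x = a + v/a` gives
`x ≤ a (1 + v)` and `x² ≥ a² + 2v`, so the integral is at most
`a^{2r-1} e^{-a²/2} ∫_0^∞ (1 + v)^{2r} e^{-v} dv`.
-/

open Set Real

section Shift

variable {E : Type*} [NormedAddCommGroup E]

theorem integrableOn_Ioi_zero_comp_add_right {f : ℝ → E} (a : ℝ) :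
    IntegrableOn (fun v ↦ f (v + a)) (Ioi 0) ↔ IntegrableOn f (Ioi a) := by
  simpa [Function.comp_def] using (measurePreserving_add_right volume a).integrableOn_comp_preimage
    (measurableEmbedding_addRight a) (f := f) (s := Ioi a)

variable [NormedSpace ℝ E]

theorem integral_Ioi_zero_comp_add_right (f : ℝ → E) (a : ℝ) :
    ∫ v in Ioi 0, f (v + a) = ∫ x in Ioi a, f x := by
  simpa using (measurePreserving_add_right volume a).setIntegral_preimage_emb
    (measurableEmbedding_addRight a) f (Ioi a)

theorem integral_Ioi_eq_smul_integral_Ioi_zero_comp {a : ℝ} (ha : 0 < a) (f : ℝ → E) :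
    ∫ x in Ioi a, f x = a⁻¹ • ∫ v in Ioi 0, f (a + a⁻¹ * v) := by
  have h := integral_comp_mul_left_Ioi (fun v ↦ f (v + a)) 0 (inv_pos.mpr ha)
  simp only [mul_zero, inv_inv, integral_Ioi_zero_comp_add_right] at h
  simp_rw [add_comm a, h, smul_smul, inv_mul_cancel₀ ha.ne', one_smul]

end Shift

section GaussianTail

variable {p a : ℝ}

theorem integrableOn_one_add_rpow_mul_exp_neg (hp : 0 ≤ p) :
    IntegrableOn (fun v ↦ (1 + v) ^ p * exp (-v)) (Ioi 0) := by
  have hΓ : IntegrableOn (fun t ↦ t ^ p * exp (-t)) (Ioi 1) := by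
    simpa [mul_comm] using (GammaIntegral_convergent (s := p + 1) (by linarith)).mono_set
      (Ioi_subset_Ioi zero_le_one)
  refine IntegrableOn.congr_fun (((integrableOn_Ioi_zero_comp_add_right 1).2 hΓ).const_mul
    (exp 1)) (fun v _ ↦ ?_) measurableSet_Ioi
  rw [add_comm v, neg_add, exp_add, exp_neg 1]
  field_simp

theorem one_le_integral_one_add_rpow_mul_exp_neg (hp : 0 ≤ p) :
    1 ≤ ∫ v in Ioi 0, (1 + v) ^ p * exp (-v) :=
  calc (1 : ℝ) = ∫ v in Ioi 0, exp (-v) := integral_exp_neg_Ioi_zero.symm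
    _ ≤ ∫ v in Ioi 0, (1 + v) ^ p * exp (-v) :=
      setIntegral_mono_on (by simpa using exp_neg_integrableOn_Ioi 0 one_pos)
        (integrableOn_one_add_rpow_mul_exp_neg hp) measurableSet_Ioi fun v hv ↦
          le_mul_of_one_le_left (exp_pos _).le (one_le_rpow (by linarith [mem_Ioi.1 hv]) hp)

theorem integrableOn_rpow_mul_exp_neg_sq_half (hp : 0 ≤ p) (ha : 0 ≤ a) :
    IntegrableOn (fun x ↦ x ^ p * exp (-x ^ 2 / 2)) (Ioi a) := by
  refine ((integrableOn_rpow_mul_exp_neg_mul_sq (b := 1 / 2) (by norm_num) (s := p)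
    (by linarith)).mono_set (Ioi_subset_Ioi ha)).congr_fun (fun x _ ↦ ?_) measurableSet_Ioi
  ring_nf

theorem exp_neg_three_halves_mul_le_rpow_mul_exp_neg_sq_half {x : ℝ} (hp : 0 ≤ p) (ha : 1 ≤ a)
    (hx : x ∈ Icc a (a + a⁻¹)) :
    exp (-(3 / 2)) * (a ^ p * exp (-a ^ 2 / 2)) ≤ x ^ p * exp (-x ^ 2 / 2) := by
  have ha0 : 0 < a := by linarith
  have hexp : exp (-(3 / 2)) * exp (-a ^ 2 / 2) ≤ exp (-x ^ 2 / 2) := by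
    rw [← exp_add]
    exact exp_le_exp.2 <| by
      nlinarith [hx.1, hx.2, inv_le_one_of_one_le₀ ha, inv_pos.2 ha0, mul_inv_cancel₀ ha0.ne']
  calc exp (-(3 / 2)) * (a ^ p * exp (-a ^ 2 / 2))
      = a ^ p * (exp (-(3 / 2)) * exp (-a ^ 2 / 2)) := by ring
    _ ≤ x ^ p * exp (-x ^ 2 / 2) :=
        mul_le_mul (rpow_le_rpow ha0.le hx.1 hp) hexp (by positivity)
          (rpow_nonneg (ha0.le.trans hx.1) p)

theorem le_integral_Ioi_rpow_mul_exp_neg_sq_half (hp : 0 ≤ p) (ha : 1 ≤ a) :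
    exp (-(3 / 2)) * (a ^ (p - 1) * exp (-a ^ 2 / 2))
      ≤ ∫ x in Ioi a, x ^ p * exp (-x ^ 2 / 2) := by
  have ha0 : 0 < a := by linarith
  have hf := integrableOn_rpow_mul_exp_neg_sq_half hp ha0.le
  calc exp (-(3 / 2)) * (a ^ (p - 1) * exp (-a ^ 2 / 2))
      = ∫ _ in Ioc a (a + a⁻¹), exp (-(3 / 2)) * (a ^ p * exp (-a ^ 2 / 2)) := by
        rw [setIntegral_const, measureReal_def, Real.volume_Ioc, add_sub_cancel_left,
          ENNReal.toReal_ofReal (by positivity), smul_eq_mul, rpow_sub_one ha0.ne']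
        ring
    _ ≤ ∫ x in Ioc a (a + a⁻¹), x ^ p * exp (-x ^ 2 / 2) :=
        setIntegral_mono_on (integrableOn_const (by simp)) (hf.mono_set Ioc_subset_Ioi_self)
          measurableSet_Ioc fun x hx ↦
            exp_neg_three_halves_mul_le_rpow_mul_exp_neg_sq_half hp ha (Ioc_subset_Icc_self hx)
    _ ≤ ∫ x in Ioi a, x ^ p * exp (-x ^ 2 / 2) := by
        refine setIntegral_mono_set hf ?_ Ioc_subset_Ioi_self.eventuallyLE
        filter_upwards [ae_restrict_mem measurableSet_Ioi] with x hx
        have : 0 < x := ha0.trans hx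
        positivity

theorem rpow_mul_exp_neg_sq_half_add_inv_mul_le {v : ℝ} (hp : 0 ≤ p) (ha : 1 ≤ a)
    (hv : 0 ≤ v) :
    (a + a⁻¹ * v) ^ p * exp (-(a + a⁻¹ * v) ^ 2 / 2)
      ≤ a ^ p * exp (-a ^ 2 / 2) * ((1 + v) ^ p * exp (-v)) := by
  have ha0 : 0 < a := by linarith
  have hinv : a * a⁻¹ = 1 := mul_inv_cancel₀ ha0.ne'
  have hbase : (a + a⁻¹ * v) ^ p ≤ a ^ p * (1 + v) ^ p := by
    rw [← mul_rpow ha0.le (by linarith)]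
    refine rpow_le_rpow (by positivity) ?_ hp
    nlinarith [mul_le_mul_of_nonneg_right (inv_le_one_of_one_le₀ ha) hv]
  have hexp : exp (-(a + a⁻¹ * v) ^ 2 / 2) ≤ exp (-a ^ 2 / 2) * exp (-v) := by
    rw [← exp_add]
    exact exp_le_exp.2 (by nlinarith [sq_nonneg (a⁻¹ * v)])
  calc (a + a⁻¹ * v) ^ p * exp (-(a + a⁻¹ * v) ^ 2 / 2)
      ≤ (a ^ p * (1 + v) ^ p) * (exp (-a ^ 2 / 2) * exp (-v)) :=
        mul_le_mul hbase hexp (exp_pos _).le (by positivity)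
    _ = a ^ p * exp (-a ^ 2 / 2) * ((1 + v) ^ p * exp (-v)) := by ring

theorem integral_Ioi_rpow_mul_exp_neg_sq_half_le (hp : 0 ≤ p) (ha : 1 ≤ a) :
    ∫ x in Ioi a, x ^ p * exp (-x ^ 2 / 2)
      ≤ (∫ v in Ioi 0, (1 + v) ^ p * exp (-v)) * (a ^ (p - 1) * exp (-a ^ 2 / 2)) := by
  have ha0 : 0 < a := by linarith
  have hcomp : ∫ v in Ioi 0, (a + a⁻¹ * v) ^ p * exp (-(a + a⁻¹ * v) ^ 2 / 2)
      ≤ ∫ v in Ioi 0, a ^ p * exp (-a ^ 2 / 2) * ((1 + v) ^ p * exp (-v)) := by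
    refine integral_mono_of_nonneg ?_ ((integrableOn_one_add_rpow_mul_exp_neg hp).const_mul _) ?_
    all_goals filter_upwards [ae_restrict_mem measurableSet_Ioi] with v hv
    · have : 0 < v := hv
      positivity
    · exact rpow_mul_exp_neg_sq_half_add_inv_mul_le hp ha (le_of_lt hv)
  rw [integral_const_mul] at hcomp
  rw [integral_Ioi_eq_smul_integral_Ioi_zero_comp ha0, smul_eq_mul]
  calc a⁻¹ * ∫ v in Ioi 0, (a + a⁻¹ * v) ^ p * exp (-(a + a⁻¹ * v) ^ 2 / 2)
      ≤ a⁻¹ * (a ^ p * exp (-a ^ 2 / 2) * ∫ v in Ioi 0, (1 + v) ^ p * exp (-v)) := by gcongr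
    _ = _ := by rw [rpow_sub_one ha0.ne']; ring

end GaussianTail

theorem setIntegral_lt_abs_gaussianReal_zero_one (f : ℝ → ℝ) {a : ℝ} (ha : 0 ≤ a) :
    ∫ x in {x | a < |x|}, f |x| ∂gaussianReal 0 1
      = 2 * (√(2 * π))⁻¹ * ∫ t in Ioi a, f t * exp (-t ^ 2 / 2) := by
  have hpdf : ∀ x, gaussianPDFReal 0 1 x • {x | a < |x|}.indicator (fun x ↦ f |x|) x
      = (Ioi a).indicator (fun t ↦ (√(2 * π))⁻¹ * (f t * exp (-t ^ 2 / 2))) |x| := by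
    intro x
    by_cases hx : a < |x|
    · rw [indicator_of_mem (s := {x | a < |x|}) hx, indicator_of_mem (s := Ioi a) hx,
        gaussianPDFReal, smul_eq_mul, sq_abs]
      simp only [NNReal.coe_one, mul_one, sub_zero]
      ring
    · rw [indicator_of_notMem (s := {x | a < |x|}) hx, indicator_of_notMem (s := Ioi a) hx,
        smul_zero]
  rw [← integral_indicator (measurableSet_lt measurable_const continuous_abs.measurable),
    integral_gaussianReal_eq_integral_smul one_ne_zero]
  simp_rw [hpdf]
  rw [integral_comp_abs, setIntegral_indicator measurableSet_Ioi, Ioi_inter_Ioi,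
    sup_eq_right.2 ha, integral_const_mul]
  ring

theorem sqrt_two_mul_rpow_mul_exp_neg_sq_half {r z : ℝ} (hz : 0 ≤ z) :
    √(2 * z) ^ (2 * r - 1) * exp (-√(2 * z) ^ 2 / 2)
      = 2 ^ (r - 1 / 2) * z ^ (r - 1 / 2) * exp (-z) := by
  rw [sq_sqrt (by linarith), sqrt_eq_rpow, ← rpow_mul (by linarith), mul_rpow zero_le_two hz]
  ring_nf

/-- Truncated Gaussian moments: for `ξ` standard normal and `r ≥ 0` there exist constants
`0 < c'_2(r) < c_2(r)` such that for all `z ≥ 1`,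
`c'_2 z^{r-1/2} e^{-z} ≤ E[|ξ|^{2r} 1(ξ² > 2z)] ≤ c_2 z^{r-1/2} e^{-z}`. -/
theorem gaussian_truncated_moment_bounds (r : ℝ) (hr : 0 ≤ r) :
    ∃ c₂' c₂ : ℝ, 0 < c₂' ∧ c₂' < c₂ ∧
      ∀ z : ℝ, 1 ≤ z →
        c₂' * z ^ (r - 1 / 2) * Real.exp (-z)
            ≤ ∫ x in {x : ℝ | x ^ 2 > 2 * z}, |x| ^ (2 * r) ∂(gaussianReal 0 1)
          ∧ ∫ x in {x : ℝ | x ^ 2 > 2 * z}, |x| ^ (2 * r) ∂(gaussianReal 0 1)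
            ≤ c₂ * z ^ (r - 1 / 2) * Real.exp (-z) := by
  have hp : 0 ≤ 2 * r := by linarith
  set K := ∫ v in Ioi 0, (1 + v) ^ (2 * r) * exp (-v)
  set c := 2 * (√(2 * π))⁻¹ * 2 ^ (r - 1 / 2)
  have hc : 0 < c := by positivity
  refine ⟨c * exp (-(3 / 2)), c * K, by positivity, mul_lt_mul_of_pos_left
    ((exp_lt_one_iff.2 (by norm_num)).trans_le (one_le_integral_one_add_rpow_mul_exp_neg hp)) hc,
    fun z hz ↦ ?_⟩
  have hz0 : 0 ≤ 2 * z := by linarith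
  have ha : 1 ≤ √(2 * z) := one_le_sqrt.2 (by linarith)
  have hset : {x : ℝ | x ^ 2 > 2 * z} = {x | √(2 * z) < |x|} := by
    ext x
    rw [mem_ofPred_eq, mem_ofPred_eq, ← sqrt_sq_eq_abs, sqrt_lt_sqrt_iff hz0, gt_iff_lt]
  rw [hset, setIntegral_lt_abs_gaussianReal_zero_one (· ^ (2 * r)) (sqrt_nonneg _)]
  have hlow := le_integral_Ioi_rpow_mul_exp_neg_sq_half hp ha
  have hupp := integral_Ioi_rpow_mul_exp_neg_sq_half_le hp ha
  rw [sqrt_two_mul_rpow_mul_exp_neg_sq_half (by linarith)] at hlow hupp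
  have hmass : (0 : ℝ) ≤ 2 * (√(2 * π))⁻¹ := by positivity
  exact ⟨Eq.trans_le (by ring) (mul_le_mul_of_nonneg_left hlow hmass),
    (mul_le_mul_of_nonneg_left hupp hmass).trans_eq (by ring)⟩
end

section
/- Let (ξ₁, ξ₂) be a centered Gaussian vector with unit variances and correlation ρ, and define Q_r(ρ, z) = E[|ξ₁|^{2r} 1(ξ₂²/2 > z)]. Then for any r > 0 and z ≥ 1, sup_ρ Q_r(ρ, z) ≤ (C₁(r) + C₂(r) z^r) z^{-1/2} e^{-z}, where C₁(r), C₂(r) depend only on r. -/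
/-!
On the event `ξ₂²/2 > z ≥ 1` we have `|ξ₂| ≥ 1`, hence `|ρ ξ₂ + ρ̃ ξ̃₁| ≤ |ξ₂| (1 + |ξ̃₁|)` for every
correlation, and independence gives `Q_r(ρ, z) ≤ E[|ξ₂|^{2r}; ξ₂²/2 > z] · E(1 + |ξ̃₁|)^{2r}`.
For the tail moment, `t = x²/2 ≥ z ≥ 1` gives `t^r e^{-t} ≤ C_r z^r e^{-z/2} e^{-t/2}`
(as `t/z ≤ 1 + (t - z)` and `u^r ≤ (2r)^r e^{u/2}`), and the Mills-type bound
`∫_{|x| > a} e^{-x²/4} dx ≤ 4 e^{-a²/4} / a` at `a = √(2z)` supplies `z^{-1/2} e^{-z/2}`.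
The result is `C z^r z^{-1/2} e^{-z}`, so `C₁` may be any positive constant.
-/

open MeasureTheory ProbabilityTheory
open scoped NNReal

/-- `Q_r(ρ, z) = E[|ξ₁|^{2r} 1(ξ₂²/2 > z)]` for a centered Gaussian pair with unit variances
and correlation `ρ`, realized via the decomposition `ξ₁ = ρ ξ₂ + √(1 - ρ²) ξ̃₁` with
`ξ₂, ξ̃₁` independent standard normal. -/
noncomputable def Qr (r ρ z : ℝ) : ℝ :=
  ∫ p in {p : ℝ × ℝ | p.1 ^ 2 / 2 > z},
    |ρ * p.1 + Real.sqrt (1 - ρ ^ 2) * p.2| ^ (2 * r)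
      ∂((gaussianReal 0 1).prod (gaussianReal 0 1))

open Real Set Filter

lemma rpow_le_mul_exp_mul {r c t : ℝ} (hr : 0 < r) (hc : 0 < c) (ht : 0 ≤ t) :
    t ^ r ≤ (r / c) ^ r * exp (c * t) := by
  have hct : 0 ≤ c * t / r := by positivity
  calc t ^ r = (c * t / r * (r / c)) ^ r := by field_simp
    _ = (c * t / r) ^ r * (r / c) ^ r := mul_rpow hct (by positivity)
    _ ≤ exp (c * t / r) ^ r * (r / c) ^ r := by
        gcongr
        linarith [add_one_le_exp (c * t / r)]
    _ = (r / c) ^ r * exp (c * t) := by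
        rw [← exp_mul, div_mul_cancel₀ _ hr.ne', mul_comm]

lemma rpow_mul_exp_neg_le_of_le {r z t : ℝ} (hr : 0 < r) (hz : 1 ≤ z) (hzt : z ≤ t) :
    t ^ r * exp (-t) ≤ (2 * r) ^ r * exp (1 / 2) * z ^ r * exp (-(z + t) / 2) := by
  have hz0 : 0 < z := by linarith
  have hratio : t / z ≤ 1 + (t - z) := by
    rw [div_le_iff₀ hz0]; nlinarith
  have hgrowth : (t / z) ^ r ≤ (2 * r) ^ r * exp ((1 + (t - z)) / 2) := by
    calc (t / z) ^ r ≤ (1 + (t - z)) ^ r :=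
          rpow_le_rpow (div_nonneg (by linarith) hz0.le) hratio hr.le
      _ ≤ (r / (1 / 2)) ^ r * exp (1 / 2 * (1 + (t - z))) :=
          rpow_le_mul_exp_mul hr (by norm_num) (by linarith)
      _ = (2 * r) ^ r * exp ((1 + (t - z)) / 2) := by ring_nf
  calc t ^ r * exp (-t) = z ^ r * (t / z) ^ r * exp (-t) := by
        rw [← mul_rpow hz0.le (div_nonneg (by linarith) hz0.le), mul_div_cancel₀ _ hz0.ne']
    _ ≤ z ^ r * ((2 * r) ^ r * exp ((1 + (t - z)) / 2)) * exp (-t) := by gcongr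
    _ = (2 * r) ^ r * z ^ r * exp ((1 + (t - z)) / 2 + -t) := by rw [exp_add]; ring
    _ = (2 * r) ^ r * exp (1 / 2) * z ^ r * exp (-(z + t) / 2) := by
        rw [show (1 + (t - z)) / 2 + -t = 1 / 2 + -(z + t) / 2 by ring, exp_add]
        ring

lemma integral_Ioi_mul_exp_neg_mul_sq {c : ℝ} (hc : 0 < c) (a : ℝ) :
    ∫ x in Ioi a, x * exp (-c * x ^ 2) = exp (-c * a ^ 2) / (2 * c) := by
  have hderiv : ∀ x ∈ Ici a,
      HasDerivAt (fun x ↦ -(2 * c)⁻¹ * exp (-c * x ^ 2)) (x * exp (-c * x ^ 2)) x := by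
    intro x _
    refine (((hasDerivAt_pow 2 x).const_mul (-c)).exp.const_mul (-(2 * c)⁻¹)).congr_deriv ?_
    field_simp
    ring
  have hlim : Tendsto (fun x ↦ -(2 * c)⁻¹ * exp (-c * x ^ 2)) atTop (nhds 0) := by
    simpa using (tendsto_exp_atBot.comp ((tendsto_pow_atTop two_ne_zero).const_mul_atTop_of_neg
      (neg_lt_zero.2 hc))).const_mul (-(2 * c)⁻¹)
  rw [integral_Ioi_of_hasDerivAt_of_tendsto' hderiv
    (integrable_mul_exp_neg_mul_sq hc).integrableOn hlim]
  ring

lemma setIntegral_abs_gt_abs_mul_exp_neg_mul_sq {a c : ℝ} (ha : 0 ≤ a) (hc : 0 < c) :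
    ∫ x in {x | a < |x|}, |x| * exp (-c * x ^ 2) = exp (-c * a ^ 2) / c := by
  have hset : {x : ℝ | a < |x|} = Iio (-a) ∪ Ioi a := by
    ext x
    simp only [mem_ofPred_eq, mem_union, mem_Iio, mem_Ioi, lt_abs]
    constructor <;> rintro (h | h) <;> first | (left; linarith) | (right; linarith)
  have hint : Integrable fun x : ℝ ↦ |x| * exp (-c * x ^ 2) := by
    simpa [abs_mul] using (integrable_mul_exp_neg_mul_sq hc).abs
  have hIoi : ∫ x in Ioi a, |x| * exp (-c * x ^ 2) = exp (-c * a ^ 2) / (2 * c) := by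
    rw [← integral_Ioi_mul_exp_neg_mul_sq hc a]
    refine setIntegral_congr_fun measurableSet_Ioi fun x hx ↦ ?_
    rw [abs_of_pos (ha.trans_lt hx)]
  have hIio : ∫ x in Iio (-a), |x| * exp (-c * x ^ 2) = exp (-c * a ^ 2) / (2 * c) := by
    rw [← integral_Iic_eq_integral_Iio, ← integral_comp_neg_Ioi, ← hIoi]
    simp only [abs_neg, neg_sq]
  have hdisj : Disjoint (Iio (-a)) (Ioi a) :=
    (Iic_disjoint_Ioi (by linarith)).mono_left Iio_subset_Iic_self
  rw [hset, setIntegral_union hdisj measurableSet_Ioi hint.integrableOn hint.integrableOn,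
    hIio, hIoi]
  field_simp
  ring

lemma setIntegral_abs_gt_exp_neg_mul_sq_le {a c : ℝ} (ha : 0 < a) (hc : 0 < c) :
    ∫ x in {x | a < |x|}, exp (-c * x ^ 2) ≤ exp (-c * a ^ 2) / (c * a) := by
  have hs : MeasurableSet {x : ℝ | a < |x|} := measurableSet_lt measurable_const measurable_abs
  have hint : Integrable fun x : ℝ ↦ a⁻¹ * (|x| * exp (-c * x ^ 2)) := by
    simpa [abs_mul] using ((integrable_mul_exp_neg_mul_sq hc).abs).const_mul a⁻¹
  calc ∫ x in {x | a < |x|}, exp (-c * x ^ 2)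
      ≤ ∫ x in {x | a < |x|}, a⁻¹ * (|x| * exp (-c * x ^ 2)) := by
        refine setIntegral_mono_on (integrable_exp_neg_mul_sq hc).integrableOn hint.integrableOn
          hs fun x hx ↦ ?_
        have : 1 ≤ a⁻¹ * |x| := by rw [← div_eq_inv_mul, one_le_div ha]; exact le_of_lt hx
        nlinarith [exp_pos (-c * x ^ 2)]
    _ = exp (-c * a ^ 2) / (c * a) := by
        rw [integral_const_mul, setIntegral_abs_gt_abs_mul_exp_neg_mul_sq ha.le hc]
        field_simp

lemma setIntegral_gaussianReal_zero_one (f : ℝ → ℝ) {s : Set ℝ} (hs : MeasurableSet s) :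
    ∫ x in s, f x ∂gaussianReal 0 1 = ∫ x in s, (√(2 * π))⁻¹ * exp (-(x ^ 2 / 2)) * f x := by
  rw [← integral_indicator hs, integral_gaussianReal_eq_integral_smul one_ne_zero,
    ← integral_indicator hs]
  congr 1
  ext x
  by_cases hx : x ∈ s <;> simp [hx, gaussianPDFReal, neg_div]

lemma abs_rpow_two_mul_eq (x r : ℝ) : |x| ^ (2 * r) = 2 ^ r * (x ^ 2 / 2) ^ r := by
  rw [← mul_rpow (by norm_num) (by positivity), mul_div_cancel₀ _ two_ne_zero, ← sq_abs,
    ← rpow_natCast, ← rpow_mul (abs_nonneg x)]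
  norm_num

lemma setIntegral_gaussianReal_abs_rpow_le {r : ℝ} (hr : 0 < r) :
    ∃ K, 0 < K ∧ ∀ z, 1 ≤ z →
      ∫ x in {x | x ^ 2 / 2 > z}, |x| ^ (2 * r) ∂gaussianReal 0 1
        ≤ K * z ^ r * z ^ (-(1 / 2 : ℝ)) * exp (-z) := by
  set L := (√(2 * π))⁻¹ * 2 ^ r * ((2 * r) ^ r * exp (1 / 2))
  refine ⟨L * 4 / √2, by positivity, fun z hz ↦ ?_⟩
  have hz0 : 0 < z := by linarith
  have hset : {x : ℝ | x ^ 2 / 2 > z} = {x | √(2 * z) < |x|} := by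
    ext x
    rw [mem_ofPred_eq, mem_ofPred_eq, Real.sqrt_lt (by positivity) (abs_nonneg x), sq_abs]
    constructor <;> intro h <;> linarith
  have hpt : ∀ x ∈ {x : ℝ | √(2 * z) < |x|},
      (√(2 * π))⁻¹ * exp (-(x ^ 2 / 2)) * |x| ^ (2 * r)
        ≤ L * z ^ r * exp (-(z / 2)) * exp (-(1 / 4) * x ^ 2) := by
    intro x hx
    have hzx : z ≤ x ^ 2 / 2 := by
      rw [← hset] at hx; exact le_of_lt hx
    have key := rpow_mul_exp_neg_le_of_le hr hz hzx
    have hsplit : exp (-(z + x ^ 2 / 2) / 2) = exp (-(z / 2)) * exp (-(1 / 4) * x ^ 2) := by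
      rw [← exp_add]; ring_nf
    rw [abs_rpow_two_mul_eq]
    calc (√(2 * π))⁻¹ * exp (-(x ^ 2 / 2)) * (2 ^ r * (x ^ 2 / 2) ^ r)
        = (√(2 * π))⁻¹ * 2 ^ r * ((x ^ 2 / 2) ^ r * exp (-(x ^ 2 / 2))) := by ring
      _ ≤ (√(2 * π))⁻¹ * 2 ^ r * ((2 * r) ^ r * exp (1 / 2) * z ^ r
            * (exp (-(z / 2)) * exp (-(1 / 4) * x ^ 2))) := by
          rw [← hsplit]; exact mul_le_mul_of_nonneg_left key (by positivity)
      _ = L * z ^ r * exp (-(z / 2)) * exp (-(1 / 4) * x ^ 2) := by ring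
  have hs : MeasurableSet {x : ℝ | √(2 * z) < |x|} :=
    measurableSet_lt measurable_const measurable_abs
  have hsqrt : √(2 * z) = √2 * z ^ (1 / 2 : ℝ) := by
    rw [Real.sqrt_mul zero_le_two, Real.sqrt_eq_rpow z]
  rw [hset, setIntegral_gaussianReal_zero_one _ hs]
  calc ∫ x in {x | √(2 * z) < |x|}, (√(2 * π))⁻¹ * exp (-(x ^ 2 / 2)) * |x| ^ (2 * r)
      ≤ ∫ x in {x | √(2 * z) < |x|}, L * z ^ r * exp (-(z / 2)) * exp (-(1 / 4) * x ^ 2) := by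
        refine integral_mono_of_nonneg (ae_of_all _ fun x ↦ by positivity)
          ((integrable_exp_neg_mul_sq (by norm_num)).const_mul _).integrableOn
          ((ae_restrict_iff' hs).mpr (ae_of_all _ hpt))
    _ = L * z ^ r * exp (-(z / 2)) * ∫ x in {x | √(2 * z) < |x|}, exp (-(1 / 4) * x ^ 2) :=
        integral_const_mul _ _
    _ ≤ L * z ^ r * exp (-(z / 2)) * (exp (-(1 / 4) * √(2 * z) ^ 2) / (1 / 4 * √(2 * z))) := by
        gcongr
        exact setIntegral_abs_gt_exp_neg_mul_sq_le (by positivity) (by norm_num)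
    _ = L * 4 / √2 * z ^ r * z ^ (-(1 / 2 : ℝ)) * exp (-z) := by
        rw [Real.sq_sqrt (by positivity), hsqrt, rpow_neg hz0.le,
          show -z = -(z / 2) + -(1 / 4) * (2 * z) by ring, exp_add]
        field_simp

lemma integrable_abs_rpow_gaussianReal {μ : ℝ} {v : ℝ≥0} {p : ℝ} (hp : 0 ≤ p) :
    Integrable (fun x ↦ |x| ^ p) (gaussianReal μ v) := by
  simpa [Real.coe_toNNReal _ hp] using
    (memLp_id_gaussianReal (μ := μ) (v := v) p.toNNReal).integrable_norm_rpow'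

lemma integrable_one_add_abs_rpow_gaussianReal {μ : ℝ} {v : ℝ≥0} {p : ℝ} (hp : 0 ≤ p) :
    Integrable (fun x ↦ (1 + |x|) ^ p) (gaussianReal μ v) := by
  have hnorm : MemLp (fun x : ℝ ↦ ‖x‖) p.toNNReal (gaussianReal μ v) :=
    (memLp_id_gaussianReal p.toNNReal).norm
  have hmem : MemLp (fun x : ℝ ↦ 1 + ‖x‖) p.toNNReal (gaussianReal μ v) :=
    (memLp_const (1 : ℝ)).add hnorm
  refine hmem.integrable_norm_rpow'.congr (ae_of_all _ fun x ↦ ?_)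
  simp only [Real.norm_eq_abs, ENNReal.coe_toReal, Real.coe_toNNReal _ hp,
    abs_of_nonneg (by positivity : 0 ≤ 1 + |x|)]

lemma abs_mul_add_mul_le_mul {ρ σ x y : ℝ} (hρ : |ρ| ≤ 1) (hσ : |σ| ≤ 1) (hx : 1 ≤ |x|) :
    |ρ * x + σ * y| ≤ |x| * (1 + |y|) := by
  calc |ρ * x + σ * y| ≤ |ρ| * |x| + |σ| * |y| := by
        simpa only [abs_mul] using abs_add_le (ρ * x) (σ * y)
    _ ≤ |x| + |y| := by gcongr <;> nlinarith [abs_nonneg x, abs_nonneg y]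
    _ ≤ |x| * (1 + |y|) := by nlinarith [abs_nonneg y]

lemma Qr_le_tail_moment_mul_moment {r ρ z : ℝ} (hr : 0 ≤ r) (hz : 1 / 2 ≤ z)
    (hρ : ρ ∈ Icc (-1 : ℝ) 1) :
    Qr r ρ z ≤ (∫ x in {x | x ^ 2 / 2 > z}, |x| ^ (2 * r) ∂gaussianReal 0 1)
      * ∫ y, (1 + |y|) ^ (2 * r) ∂gaussianReal 0 1 := by
  set S : Set ℝ := {x | x ^ 2 / 2 > z}
  have hS : MeasurableSet S := measurableSet_lt measurable_const (by fun_prop)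
  have hσ : |√(1 - ρ ^ 2)| ≤ 1 := by
    rw [abs_of_nonneg (Real.sqrt_nonneg _), Real.sqrt_le_one]; nlinarith
  have hbound : ∀ p ∈ S ×ˢ (univ : Set ℝ), |ρ * p.1 + √(1 - ρ ^ 2) * p.2| ^ (2 * r)
      ≤ |p.1| ^ (2 * r) * (1 + |p.2|) ^ (2 * r) := by
    rintro ⟨x, y⟩ ⟨hx, -⟩
    have hx1 : 1 ≤ |x| := by
      have : z < x ^ 2 / 2 := hx
      nlinarith [sq_abs x, abs_nonneg x]
    rw [← mul_rpow (abs_nonneg x) (by positivity)]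
    exact rpow_le_rpow (abs_nonneg _) (abs_mul_add_mul_le_mul (abs_le.mpr hρ) hσ hx1)
      (by positivity)
  have hint : Integrable (fun p : ℝ × ℝ ↦ |p.1| ^ (2 * r) * (1 + |p.2|) ^ (2 * r))
      ((gaussianReal 0 1).prod (gaussianReal 0 1)) :=
    (integrable_abs_rpow_gaussianReal (by positivity)).mul_prod
      (integrable_one_add_abs_rpow_gaussianReal (by positivity))
  calc Qr r ρ z = ∫ p in S ×ˢ univ, |ρ * p.1 + √(1 - ρ ^ 2) * p.2| ^ (2 * r)
        ∂(gaussianReal 0 1).prod (gaussianReal 0 1) := by rw [prod_univ]; rfl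
    _ ≤ ∫ p in S ×ˢ univ, |p.1| ^ (2 * r) * (1 + |p.2|) ^ (2 * r)
        ∂(gaussianReal 0 1).prod (gaussianReal 0 1) :=
      integral_mono_of_nonneg (ae_of_all _ fun _ ↦ by positivity) hint.integrableOn
        ((ae_restrict_iff' (hS.prod MeasurableSet.univ)).mpr (ae_of_all _ hbound))
    _ = _ := by
      rw [setIntegral_prod_mul (fun x ↦ |x| ^ (2 * r)) (fun y ↦ (1 + |y|) ^ (2 * r)),
        Measure.restrict_univ]

/-- Uniform upper bound on `Q_r(ρ, z)`: for `r > 0` there exist constants `C₁(r), C₂(r) > 0`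
such that for every `z ≥ 1` and every correlation `ρ ∈ [-1, 1]`,
`Q_r(ρ, z) ≤ (C₁ + C₂ z^r) z^{-1/2} e^{-z}`. -/
theorem Qr_upper_bound (r : ℝ) (hr : 0 < r) :
    ∃ C₁ C₂ : ℝ, 0 < C₁ ∧ 0 < C₂ ∧
      ∀ z : ℝ, 1 ≤ z → ∀ ρ : ℝ, ρ ∈ Set.Icc (-1 : ℝ) 1 →
        Qr r ρ z ≤ (C₁ + C₂ * z ^ r) * z ^ (-(1 / 2 : ℝ)) * Real.exp (-z) := by
  obtain ⟨K, hK, htail⟩ := setIntegral_gaussianReal_abs_rpow_le hr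
  set M := ∫ y, (1 + |y|) ^ (2 * r) ∂gaussianReal 0 1
  have hM : 1 ≤ M :=
    calc (1 : ℝ) = ∫ _, (1 : ℝ) ∂gaussianReal 0 1 := by simp
      _ ≤ M := integral_mono (integrable_const _)
          (integrable_one_add_abs_rpow_gaussianReal (by positivity))
          fun y ↦ one_le_rpow (by linarith [abs_nonneg y]) (by positivity)
  refine ⟨1, K * M, one_pos, mul_pos hK (by linarith), fun z hz ρ hρ ↦ ?_⟩
  calc Qr r ρ z ≤ (K * z ^ r * z ^ (-(1 / 2 : ℝ)) * exp (-z)) * M :=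
        (Qr_le_tail_moment_mul_moment hr.le (by linarith) hρ).trans
          (mul_le_mul_of_nonneg_right (htail z hz) (by positivity))
    _ ≤ (1 + K * M * z ^ r) * z ^ (-(1 / 2 : ℝ)) * exp (-z) := by
        nlinarith [show 0 < z ^ (-(1 / 2 : ℝ)) * exp (-z) by positivity]
end

section
/- With Q_r(ρ, z) = E[|ξ₁|^{2r} 1(ξ₂²/2 > z)] for a centered unit-variance Gaussian pair with correlation ρ, for any r > 0 and z ≥ 1 there exists C₃(r) > 0 such that inf_ρ Q_r(ρ, z) ≥ C₃(r) z^{-1/2} e^{-z}. -/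
/-!
Reflecting `ξ₂` shows `Q_r(-ρ, z) = Q_r(ρ, z)`, so we may take `ρ ≥ 0`. On the event
`{ξ₂ > √(2z), ξ̃₁ > 1}` one has `ρ ξ₂ + √(1 - ρ²) ξ̃₁ ≥ ρ + √(1 - ρ²) ≥ 1`, hence
`Q_r(ρ, z) ≥ P(ξ₂ > √(2z)) P(ξ̃₁ > 1)`. The Gaussian tail `P(ξ₂ > √(2z))` is at least the length
`z^{-1/2}` of the interval `(√(2z), √(2z) + z^{-1/2}]` times the density at its right end, which is
`≥ e^{-z-2} / √(2π)` for `z ≥ 1`.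
-/

open MeasureTheory ProbabilityTheory
open scoped NNReal

open Real Set

lemma integrable_abs_linear_rpow_gaussianReal_prod {m₁ m₂ : ℝ} {v₁ v₂ : ℝ≥0} (a b : ℝ)
    {s : ℝ} (hs : 0 ≤ s) :
    Integrable (fun p : ℝ × ℝ => |a * p.1 + b * p.2| ^ s)
      ((gaussianReal m₁ v₁).prod (gaussianReal m₂ v₂)) := by
  have hX : MemLp (fun p : ℝ × ℝ => a * p.1 + b * p.2) (ENNReal.ofReal s)
      ((gaussianReal m₁ v₁).prod (gaussianReal m₂ v₂)) :=
    (((memLp_id_gaussianReal' _ ENNReal.ofReal_ne_top).comp_fst _).const_mul a).add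
      (((memLp_id_gaussianReal' _ ENNReal.ofReal_ne_top).comp_snd _).const_mul b)
  simpa [ENNReal.toReal_ofReal hs] using hX.integrable_norm_rpow'

lemma mul_gaussianPDFReal_le_gaussianReal_real_Ioc {v : ℝ≥0} (hv : v ≠ 0) {a b : ℝ} (ha : 0 ≤ a)
    (hab : a ≤ b) :
    (b - a) * gaussianPDFReal 0 v b ≤ (gaussianReal 0 v).real (Ioc a b) := by
  rw [measureReal_def, gaussianReal_apply_eq_integral 0 hv,
    ENNReal.toReal_ofReal (setIntegral_nonneg measurableSet_Ioc
      fun x _ => gaussianPDFReal_nonneg 0 v x)]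
  have h := setIntegral_ge_of_const_le (μ := volume) (s := Ioc a b) (c := gaussianPDFReal 0 v b)
    measurableSet_Ioc (by simp) (fun x hx => ?_) (integrable_gaussianPDFReal 0 v).integrableOn
  · simpa [Real.volume_real_Ioc_of_le hab] using h
  · simp only [gaussianPDFReal, sub_zero]
    gcongr
    exacts [ha.trans hx.1.le, hx.2]

lemma Qr_neg (r ρ z : ℝ) : Qr r (-ρ) z = Qr r ρ z := by
  have hneg : MeasurePreserving (fun x : ℝ => -x) (gaussianReal 0 1) (gaussianReal 0 1) :=
    ⟨measurable_neg, by simpa using gaussianReal_map_neg (μ := 0) (v := 1)⟩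
  have h := (hneg.prod (MeasurePreserving.id (gaussianReal 0 1))).setIntegral_preimage_emb
    (MeasurableEquiv.neg ℝ |>.prodCongr (MeasurableEquiv.refl ℝ)).measurableEmbedding
    (fun p : ℝ × ℝ => |-ρ * p.1 + √(1 - (-ρ) ^ 2) * p.2| ^ (2 * r))
    {p : ℝ × ℝ | p.1 ^ 2 / 2 > z}
  simp only [Qr]
  rw [← h]
  simp only [preimage, mem_ofPred_eq, Prod.map_fst, Prod.map_snd, id_eq, neg_sq, mul_neg, neg_mul,
    neg_neg]

lemma Qr_abs (r ρ z : ℝ) : Qr r |ρ| z = Qr r ρ z := by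
  rcases abs_choice ρ with h | h <;> rw [h]
  exact Qr_neg r ρ z

lemma mul_gaussianPDFReal_add_le_gaussianReal_real_Ioi {v : ℝ≥0} (hv : v ≠ 0) {a h : ℝ}
    (ha : 0 ≤ a) (hh : 0 ≤ h) :
    h * gaussianPDFReal 0 v (a + h) ≤ (gaussianReal 0 v).real (Ioi a) :=
  calc h * gaussianPDFReal 0 v (a + h)
      = (a + h - a) * gaussianPDFReal 0 v (a + h) := by ring
    _ ≤ (gaussianReal 0 v).real (Ioc a (a + h)) :=
      mul_gaussianPDFReal_le_gaussianReal_real_Ioc hv ha (le_add_of_nonneg_right hh)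
    _ ≤ (gaussianReal 0 v).real (Ioi a) := measureReal_mono Ioc_subset_Ioi_self

lemma one_le_mul_add_mul {ρ c x y : ℝ} (hρ : 0 ≤ ρ) (hc : 0 ≤ c) (hρc : ρ ^ 2 + c ^ 2 = 1)
    (hx : 1 ≤ x) (hy : 1 ≤ y) : 1 ≤ ρ * x + c * y := by
  have : 1 ≤ ρ + c := by nlinarith [mul_nonneg hρ hc]
  nlinarith [mul_nonneg hρ (sub_nonneg.2 hx), mul_nonneg hc (sub_nonneg.2 hy)]

lemma gaussianReal_real_Ioi_mul_le_Qr {r ρ z : ℝ} (hr : 0 ≤ r) (hz : 1 / 2 ≤ z) (hρ₀ : 0 ≤ ρ)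
    (hρ₁ : ρ ≤ 1) :
    (gaussianReal 0 1).real (Ioi √(2 * z)) * (gaussianReal 0 1).real (Ioi 1) ≤ Qr r ρ z := by
  set S := Ioi √(2 * z) ×ˢ Ioi (1 : ℝ)
  have hf := integrable_abs_linear_rpow_gaussianReal_prod (m₁ := 0) (m₂ := 0) (v₁ := 1) (v₂ := 1)
    ρ √(1 - ρ ^ 2) (mul_nonneg zero_le_two hr)
  have hS : S ⊆ {p : ℝ × ℝ | p.1 ^ 2 / 2 > z} := by
    rintro ⟨x, y⟩ ⟨hx, -⟩
    have := pow_lt_pow_left₀ hx (sqrt_nonneg _) two_ne_zero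
    rw [sq_sqrt (by linarith)] at this
    simp only [mem_ofPred_eq, gt_iff_lt]
    linarith
  have h_one_le : ∀ p ∈ S, 1 ≤ |ρ * p.1 + √(1 - ρ ^ 2) * p.2| ^ (2 * r) := by
    rintro ⟨x, y⟩ ⟨hx, hy⟩
    have hx1 : 1 ≤ x := le_of_lt (lt_of_le_of_lt (by rw [one_le_sqrt]; linarith) hx)
    refine one_le_rpow ((one_le_mul_add_mul hρ₀ (sqrt_nonneg _) ?_ hx1 (le_of_lt hy)).trans
      (le_abs_self _)) (by linarith)
    rw [sq_sqrt (by nlinarith)]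
    ring
  calc (gaussianReal 0 1).real (Ioi √(2 * z)) * (gaussianReal 0 1).real (Ioi 1)
      = ((gaussianReal 0 1).prod (gaussianReal 0 1)).real S • (1 : ℝ) := by
        rw [measureReal_prod_prod, smul_eq_mul, mul_one]
    _ ≤ ∫ p in S, |ρ * p.1 + √(1 - ρ ^ 2) * p.2| ^ (2 * r)
          ∂((gaussianReal 0 1).prod (gaussianReal 0 1)) :=
        setIntegral_ge_of_const_le (measurableSet_Ioi.prod measurableSet_Ioi) (measure_ne_top _ _)
          h_one_le hf.integrableOn
    _ ≤ Qr r ρ z :=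
        setIntegral_mono_set hf.integrableOn
          (ae_of_all _ fun _ => rpow_nonneg (abs_nonneg _) _) hS.eventuallyLE

lemma gaussianReal_real_Ioi_sqrt_two_mul_ge {z : ℝ} (hz : 1 ≤ z) :
    z ^ (-(1 / 2 : ℝ)) * exp (-z) * ((√(2 * π))⁻¹ * exp (-2)) ≤
      (gaussianReal 0 1).real (Ioi √(2 * z)) := by
  have hs : 1 ≤ √z := one_le_sqrt.2 hz
  have hsq : √z ^ 2 = z := sq_sqrt (by linarith)
  have h2 : √2 ^ 2 = 2 := sq_sqrt zero_le_two
  have h2le : √2 ≤ 3 / 2 := by nlinarith [sqrt_nonneg 2]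
  have hb : (√(2 * z) + (√z)⁻¹) ^ 2 ≤ 2 * z + 4 := by
    rw [sqrt_mul zero_le_two]
    have hinv : (√z)⁻¹ ≤ 1 := inv_le_one_of_one_le₀ hs
    have : √2 * √z * (√z)⁻¹ = √2 := by field_simp
    nlinarith [inv_nonneg.2 (sqrt_nonneg z)]
  calc z ^ (-(1 / 2 : ℝ)) * exp (-z) * ((√(2 * π))⁻¹ * exp (-2))
      = (√z)⁻¹ * ((√(2 * π))⁻¹ * exp (-(2 * z + 4) / 2)) := by
        rw [rpow_neg (by linarith), ← sqrt_eq_rpow, show -(2 * z + 4) / 2 = -z + -2 by ring,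
          exp_add]
        ring
    _ ≤ (√z)⁻¹ * gaussianPDFReal 0 1 (√(2 * z) + (√z)⁻¹) := by
        simp only [gaussianPDFReal, NNReal.coe_one, mul_one, sub_zero]
        gcongr
    _ ≤ (gaussianReal 0 1).real (Ioi √(2 * z)) :=
        mul_gaussianPDFReal_add_le_gaussianReal_real_Ioi one_ne_zero (sqrt_nonneg _)
          (inv_nonneg.2 (sqrt_nonneg z))

/-- Uniform lower bound on `Q_r(ρ, z)`: for `r > 0` there exists `C₃(r) > 0` such that for
every `z ≥ 1` and every correlation `ρ ∈ [-1, 1]`, `Q_r(ρ, z) ≥ C₃ z^{-1/2} e^{-z}`. -/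
theorem Qr_lower_bound (r : ℝ) (hr : 0 < r) :
    ∃ C₃ : ℝ, 0 < C₃ ∧
      ∀ z : ℝ, 1 ≤ z → ∀ ρ : ℝ, ρ ∈ Set.Icc (-1 : ℝ) 1 →
        C₃ * z ^ (-(1 / 2 : ℝ)) * Real.exp (-z) ≤ Qr r ρ z := by
  set P := (gaussianReal 0 1).real (Ioi 1)
  have hP : 0 < P := (mul_pos one_pos (gaussianPDFReal_pos 0 1 _ one_ne_zero)).trans_le
    (mul_gaussianPDFReal_add_le_gaussianReal_real_Ioi one_ne_zero zero_le_one zero_le_one)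
  refine ⟨(√(2 * π))⁻¹ * exp (-2) * P, by positivity, fun z hz ρ hρ => ?_⟩
  rw [← Qr_abs]
  calc (√(2 * π))⁻¹ * exp (-2) * P * z ^ (-(1 / 2 : ℝ)) * exp (-z)
      = z ^ (-(1 / 2 : ℝ)) * exp (-z) * ((√(2 * π))⁻¹ * exp (-2)) * P := by ring
    _ ≤ (gaussianReal 0 1).real (Ioi √(2 * z)) * P := by
        gcongr
        exact gaussianReal_real_Ioi_sqrt_two_mul_ge hz
    _ ≤ Qr r |ρ| z :=
        gaussianReal_real_Ioi_mul_le_Qr hr.le (by linarith) (abs_nonneg ρ) (abs_le.2 hρ)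
end
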